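/- If X is a regular Hausdorff crowded space (no isolated points), then the space S_c(X) of nontrivial convergent sequences in X, equipped with the Vietoris topology, is of the first category in itself (i.e., S_c(X) is meager in itself). -/

import Mathlib

open Set Filter Topology

/-- `S` is a nontrivial convergent sequence in a topological space. -/
def IsNTCS {X : Type*} [TopologicalSpace X] (S : Set X) : Prop :=
  ∃ (x : ℕ → X) (L : X), Function.Injective x ∧
    Tendsto x atTop (𝓝 L) ∧ L ∉ Set.range x ∧ S = Set.range x ∪ {L}

/-- The family of nontrivial convergent sequences in `X`. -/
def Sc (X : Type*) [TopologicalSpace X] : Set (Set X) := {S | IsNTCS S}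

/-- The Vietoris topology on subsets of `X`, generated by the standard subbasis. -/
instance vietoris (X : Type*) [TopologicalSpace X] : TopologicalSpace (Set X) :=
  TopologicalSpace.generateFrom
    {s | (∃ U : Set X, IsOpen U ∧ s = {K : Set X | K ⊆ U}) ∨
         (∃ U : Set X, IsOpen U ∧ s = {K : Set X | (K ∩ U).Nonempty})}

/-!
A marked neighbourhood is a Vietoris-open `O` with four pairwise disjoint open markers `A (i, j)`;
it selects the sets in `O` meeting every marker. Every Vietoris neighbourhood of a convergent
sequence `S` contains a marked neighbourhood that still contains a convergent sequence, with
markers inside prescribed open sets met by `S`: add four new points to `S` (there is room since `X`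
is crowded) and separate them by regularity. By Zorn's lemma this yields open dense sets
`Gₙ ⊆ Sc X`, each a disjoint union of marked neighbourhoods, the closures of the markers
`A (i, j)` at level `n + 1` lying inside the marker `A (i, false)` of the parent at level `n`.
A sequence in every `Gₙ` runs down a branch and meets each `A (i, true)` in a new point inside the
root marker `A (i, false)`, so its limit lies in both disjoint root markers `A (false, false)` and
`A (true, false)`. Hence `⋂ Gₙ = ∅`.
-/

open Function

section Vietoris

variable {X : Type*} [TopologicalSpace X]

theorem isOpen_setOf_inter_nonempty {U : Set X} (hU : IsOpen U) :
    IsOpen {K : Set X | (K ∩ U).Nonempty} :=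
  TopologicalSpace.GenerateOpen.basic _ (Or.inr ⟨U, hU, rfl⟩)

theorem exists_isOpen_forall_between_mem {O : Set (Set X)} (hO : IsOpen O) {S : Set X}
    (hS : S ∈ O) : ∃ V, IsOpen V ∧ S ⊆ V ∧ ∀ K, S ⊆ K → K ⊆ V → K ∈ O := by
  induction hO generalizing S with
  | basic s hs =>
    rcases hs with ⟨U, hU, rfl⟩ | ⟨U, hU, rfl⟩
    · exact ⟨U, hU, hS, fun K _ hKU => hKU⟩
    · exact ⟨univ, isOpen_univ, subset_univ S, fun K hSK _ =>
        hS.mono (inter_subset_inter_left U hSK)⟩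
  | univ => exact ⟨univ, isOpen_univ, subset_univ S, fun _ _ _ => trivial⟩
  | inter s t _ _ ihs iht =>
    obtain ⟨V, hV, hSV, hVs⟩ := ihs hS.1
    obtain ⟨W, hW, hSW, hWt⟩ := iht hS.2
    exact ⟨V ∩ W, hV.inter hW, subset_inter hSV hSW, fun K hSK hK =>
      ⟨hVs K hSK (hK.trans inter_subset_left), hWt K hSK (hK.trans inter_subset_right)⟩⟩
  | sUnion F _ ih =>
    obtain ⟨s, hsF, hSs⟩ := hS
    obtain ⟨V, hV, hSV, hVs⟩ := ih s hsF hSs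
    exact ⟨V, hV, hSV, fun K hSK hKV => ⟨s, hsF, hVs K hSK hKV⟩⟩

end Vietoris

section ConvergentSequence

variable {X : Type*} [TopologicalSpace X]

theorem IsNTCS.nonempty {S : Set X} (hS : IsNTCS S) : S.Nonempty := by
  obtain ⟨x, L, -, -, -, rfl⟩ := hS
  exact ⟨L, Or.inr rfl⟩

theorem IsNTCS.insert {S : Set X} (hS : IsNTCS S) (a : X) : IsNTCS (insert a S) := by
  by_cases ha : a ∈ S
  · rwa [insert_eq_of_mem ha]
  obtain ⟨x, L, hinj, hlim, hL, rfl⟩ := hS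
  let y : ℕ → X := fun n => Nat.rec a (fun k _ => x k) n
  -- plain `insert` would resolve to this lemma
  have hy : range y = Insert.insert a (range x) := by
    ext z
    constructor
    · rintro ⟨_ | k, rfl⟩
      exacts [Or.inl rfl, Or.inr ⟨k, rfl⟩]
    · rintro (rfl | ⟨k, rfl⟩)
      exacts [⟨0, rfl⟩, ⟨k + 1, rfl⟩]
  refine ⟨y, L, ?_, (tendsto_add_atTop_iff_nat 1).1 hlim, ?_, by rw [hy, insert_union]⟩
  · rintro (_ | m) (_ | n) h
    · rfl
    · exact absurd (Or.inl ⟨n, h.symm⟩) ha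
    · exact absurd (Or.inl ⟨m, h⟩) ha
    · exact congrArg (· + 1) (hinj h)
  · rw [hy]
    rintro (h | h)
    · exact ha (Or.inr h.symm)
    · exact hL h

theorem IsNTCS.union_of_finite {S F : Set X} (hS : IsNTCS S) (hF : F.Finite) :
    IsNTCS (S ∪ F) := by
  induction F, hF using Set.Finite.induction_on with
  | empty => rwa [union_empty]
  | insert _ _ ih => rw [union_insert]; exact ih.insert _

theorem IsNTCS.exists_forall_mem_closure_of_infinite {S : Set X} (hS : IsNTCS S) :
    ∃ L, ∀ T ⊆ S, T.Infinite → L ∈ closure T := by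
  obtain ⟨x, L, -, hlim, -, rfl⟩ := hS
  refine ⟨L, fun T hTS hT => mem_closure_iff_nhds.2 fun W hW => ?_⟩
  have hout : (x ⁻¹' W)ᶜ.Finite := by
    rw [← mem_cofinite, Nat.cofinite_eq_atTop]
    exact hlim hW
  have hTW : T \ W ⊆ x '' (x ⁻¹' W)ᶜ := by
    rintro t ⟨htS, htW⟩
    rcases hTS htS with ⟨n, rfl⟩ | rfl
    · exact ⟨n, htW, rfl⟩
    · exact absurd (mem_of_mem_nhds hW) htW
  by_contra hWT
  exact hT (((hout.image x).subset hTW).subset fun t ht =>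
    ⟨ht, fun htW => hWT ⟨t, htW, ht⟩⟩)

end ConvergentSequence

theorem IsOpen.infinite_of_forall_not_isOpen_singleton {X : Type*} [TopologicalSpace X]
    [T1Space X] (hcrowded : ∀ x : X, ¬ IsOpen ({x} : Set X)) {U : Set X} (hU : IsOpen U)
    (hne : U.Nonempty) : U.Infinite := fun hfin =>
  hcrowded hne.some (isOpen_singleton_of_finite_mem_nhds _ (hU.mem_nhds hne.some_mem) hfin)

theorem exists_injective_forall_mem_of_infinite {ι α : Type*} [Finite ι] {W : ι → Set α}
    (hW : ∀ i, (W i).Infinite) : ∃ x : ι → α, Injective x ∧ ∀ i, x i ∈ W i := by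
  classical
  cases nonempty_fintype ι
  choose t htW hcard using fun i => (hW i).exists_subset_card_eq (Fintype.card ι)
  obtain ⟨x, hx, hxt⟩ := (Finset.all_card_le_biUnion_card_iff_exists_injective t).1 fun s => by
    rcases s.eq_empty_or_nonempty with rfl | ⟨i, hi⟩
    · simp
    · calc s.card ≤ Fintype.card ι := s.card_le_univ
        _ = (t i).card := (hcard i).symm
        _ ≤ (s.biUnion t).card := Finset.card_le_card (Finset.subset_biUnion_of_mem t hi)
  exact ⟨x, hx, fun i => htW i (hxt i)⟩

theorem exists_isOpen_pairwise_disjoint_closure_subset {X ι : Type*} [TopologicalSpace X]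
    [T2Space X] [RegularSpace X] [Finite ι] {x : ι → X} (hx : Injective x) {W : ι → Set X}
    (hW : ∀ i, W i ∈ 𝓝 (x i)) :
    ∃ A : ι → Set X, (∀ i, IsOpen (A i)) ∧ (∀ i, x i ∈ A i) ∧ (∀ i, closure (A i) ⊆ W i) ∧
      Pairwise (Disjoint on A) := by
  obtain ⟨s, hs, hsd⟩ := Pairwise.exists_mem_filter_of_disjoint (l := fun i => 𝓝 (x i))
    fun i j hij => disjoint_nhds_nhds.2 (hx.ne hij)
  choose t ht htc hts using fun i =>
    exists_mem_nhds_isClosed_subset (inter_mem (hs i) (hW i))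
  refine ⟨fun i => interior (t i), fun i => isOpen_interior,
    fun i => mem_interior_iff_mem_nhds.2 (ht i),
    fun i => (closure_minimal interior_subset (htc i)).trans ((hts i).trans inter_subset_right),
    fun i j hij => (hsd hij).mono ?_ ?_⟩ <;>
  exact interior_subset.trans ((hts _).trans inter_subset_left)

theorem exists_subset_pairwiseDisjoint_dense_biUnion {Y ι : Type*} [TopologicalSpace Y]
    {U : ι → Set Y} {g : Set ι}
    (hg : ∀ O, IsOpen O → O.Nonempty → ∃ i ∈ g, (U i).Nonempty ∧ U i ⊆ O) :
    ∃ s ⊆ g, s.PairwiseDisjoint U ∧ Dense (⋃ i ∈ s, U i) := by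
  obtain ⟨s, hs⟩ := zorn_subset {s | s ⊆ g ∧ s.PairwiseDisjoint U} fun c hc hchain =>
    ⟨⋃₀ c, ⟨sUnion_subset fun s hs => (hc hs).1,
      (pairwiseDisjoint_sUnion hchain.directedOn).2 fun s hs => (hc hs).2⟩,
      fun s hs => subset_sUnion_of_mem hs⟩
  refine ⟨s, hs.prop.1, hs.prop.2, dense_iff_inter_open.2 fun O hO hne => ?_⟩
  by_contra hOs
  obtain ⟨i, hig, hi, hiO⟩ := hg O hO hne
  have hdisj : ∀ j ∈ s, Disjoint (U i) (U j) := fun j hj =>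
    disjoint_left.2 fun y hyi hyj => hOs ⟨y, hiO hyi, mem_biUnion hj hyj⟩
  have his : i ∉ s := fun his => hi.ne_empty (disjoint_self.1 (hdisj i his))
  exact his (hs.mem_of_prop_insert ⟨insert_subset hig hs.prop.1,
    hs.prop.2.insert fun j hj _ => hdisj j hj⟩)

theorem isMeagre_univ_of_tree {Y ι : Type*} [TopologicalSpace Y] (U : ι → Set Y)
    (R : ι → ι → Prop) (hU : ∀ i, IsOpen (U i))
    (hroot : ∀ O, IsOpen O → O.Nonempty → ∃ i, (U i).Nonempty ∧ U i ⊆ O)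
    (hchild : ∀ i O, IsOpen O → (O ∩ U i).Nonempty →
      ∃ j, R i j ∧ (U j).Nonempty ∧ U j ⊆ O ∩ U i)
    (hbranch : ∀ N : ℕ → ι, (∀ n, R (N n) (N (n + 1))) → ⋂ n, U (N n) = ∅) :
    IsMeagre (univ : Set Y) := by
  let Stage := {s : Set ι // s.PairwiseDisjoint U ∧ Dense (⋃ i ∈ s, U i)}
  obtain ⟨s₀, -, hs₀⟩ := exists_subset_pairwiseDisjoint_dense_biUnion (g := univ)
    fun O hO hne => by simpa using hroot O hO hne
  have hnext : ∀ s : Stage, ∃ t : Stage, ∀ j ∈ t.1, ∃ i ∈ s.1, R i j ∧ U j ⊆ U i := by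
    intro s
    obtain ⟨t, hts, ht⟩ := exists_subset_pairwiseDisjoint_dense_biUnion
      (g := {j | ∃ i ∈ s.1, R i j ∧ U j ⊆ U i}) fun O hO hne => by
        obtain ⟨y, hyO, hy⟩ := s.2.2.inter_open_nonempty O hO hne
        obtain ⟨i, hi, hyi⟩ := mem_iUnion₂.1 hy
        obtain ⟨j, hij, hj, hjO⟩ := hchild i O hO ⟨y, hyO, hyi⟩
        exact ⟨j, ⟨i, hi, hij, hjO.trans inter_subset_right⟩, hj, hjO.trans inter_subset_left⟩
    exact ⟨⟨t, ht⟩, hts⟩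
  choose next hnext using hnext
  let stage : ℕ → Stage := fun n => next^[n] ⟨s₀, hs₀⟩
  have hG : ⋂ n, ⋃ i ∈ (stage n).1, U i = ∅ := by
    refine eq_empty_of_forall_notMem fun y hy => ?_
    choose N hN hyN using fun n => mem_iUnion₂.1 (mem_iInter.1 hy n)
    have hR : ∀ n, R (N n) (N (n + 1)) := by
      intro n
      have hN' := hN (n + 1)
      simp only [stage, iterate_succ_apply'] at hN'
      obtain ⟨i, hi, hiN, hNi⟩ := hnext _ _ hN'
      have hiN' : i = N n :=
        (stage n).2.1.elim hi (hN n) (not_disjoint_iff.2 ⟨y, hNi (hyN (n + 1)), hyN n⟩)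
      rwa [hiN'] at hiN
    exact (hbranch N hR).subset (mem_iInter.2 hyN)
  rw [IsMeagre, compl_univ, ← hG]
  exact countable_iInter_mem.2 fun n =>
    residual_of_dense_open (isOpen_biUnion fun i _ => hU i) (stage n).2.2

theorem infinite_inter_of_nested {X : Type*} {S : Set X} {B D : ℕ → Set X}
    (hB : ∀ n, B (n + 1) ⊆ B n) (hD : ∀ n, D (n + 1) ⊆ B n) (hBD : ∀ n, Disjoint (B n) (D n))
    (hS : ∀ n, (S ∩ D n).Nonempty) : (S ∩ B 0).Infinite := by
  have hanti : Antitone B := antitone_nat_of_succ_le hB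
  choose s hsS hsD using hS
  have hsB : ∀ n, s (n + 1) ∈ B n := fun n => hD n (hsD (n + 1))
  refine infinite_of_injective_forall_mem (f := fun n => s (n + 1))
    (Injective.of_lt_imp_ne fun m n hmn hs => ?_) fun n => ⟨hsS _, hanti n.zero_le (hsB n)⟩
  exact disjoint_left.1 (hBD (m + 1)) (hanti hmn (hsB n)) (hs ▸ hsD (m + 1))

structure MarkedNbhd (X : Type*) [TopologicalSpace X] where
  O : Set (Set X)
  A : Bool × Bool → Set X
  isOpen_O : IsOpen O
  isOpen_A : ∀ p, IsOpen (A p)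
  pairwise_disjoint_A : Pairwise (Disjoint on A)

namespace MarkedNbhd

variable {X : Type*} [TopologicalSpace X]

def sets (N : MarkedNbhd X) : Set (Set X) := {K | K ∈ N.O ∧ ∀ p, (K ∩ N.A p).Nonempty}

theorem isOpen_sets (N : MarkedNbhd X) : IsOpen N.sets := by
  have h : N.sets = N.O ∩ ⋂ p, {K | (K ∩ N.A p).Nonempty} := by
    ext K
    simp only [sets, mem_inter_iff, mem_iInter]
    rfl
  rw [h]
  exact N.isOpen_O.inter
    (isOpen_iInter_of_finite fun p => isOpen_setOf_inter_nonempty (N.isOpen_A p))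

def IsChild (P C : MarkedNbhd X) : Prop := ∀ i j, closure (C.A (i, j)) ⊆ P.A (i, false)

theorem exists_closure_A_subset [T2Space X] [RegularSpace X]
    (hcrowded : ∀ x : X, ¬ IsOpen ({x} : Set X))
    {O : Set (Set X)} (hO : IsOpen O) {S : Set X} (hSO : S ∈ O) (hS : IsNTCS S)
    {T : Bool → Set X} (hT : ∀ i, IsOpen (T i)) (hST : ∀ i, (S ∩ T i).Nonempty) :
    ∃ N : MarkedNbhd X, N.O = O ∧ (∃ K ∈ N.sets, IsNTCS K) ∧
      ∀ i j, closure (N.A (i, j)) ⊆ T i := by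
  obtain ⟨V, hV, hSV, hVO⟩ := exists_isOpen_forall_between_mem hO hSO
  have hTV : ∀ i, IsOpen (T i ∩ V) := fun i => (hT i).inter hV
  obtain ⟨x, hx, hxTV⟩ := exists_injective_forall_mem_of_infinite
    (W := fun p : Bool × Bool => T p.1 ∩ V) fun p =>
      have ⟨s, hsS, hsT⟩ := hST p.1
      (hTV p.1).infinite_of_forall_not_isOpen_singleton hcrowded ⟨s, hsT, hSV hsS⟩
  obtain ⟨A, hA, hxA, hAT, hAd⟩ :=
    exists_isOpen_pairwise_disjoint_closure_subset hx fun p => (hTV p.1).mem_nhds (hxTV p)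
  have hxV : range x ⊆ V := range_subset_iff.2 fun p => (hxTV p).2
  refine ⟨⟨O, A, hO, hA, hAd⟩, rfl,
    ⟨S ∪ range x, ⟨?_, ?_⟩, hS.union_of_finite (finite_range x)⟩,
    fun i j => (hAT (i, j)).trans inter_subset_left⟩
  · exact hVO _ subset_union_left (union_subset hSV hxV)
  · exact fun p => ⟨x p, Or.inr ⟨p, rfl⟩, hxA p⟩

theorem not_isNTCS_of_forall_mem {N : ℕ → MarkedNbhd X} (hN : ∀ n, (N n).IsChild (N (n + 1)))
    {S : Set X} (hSN : ∀ n, S ∈ (N n).sets) : ¬ IsNTCS S := by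
  intro hS
  obtain ⟨L, hL⟩ := hS.exists_forall_mem_closure_of_infinite
  have hLA : ∀ i, L ∈ (N 0).A (i, false) := fun i =>
    hN 0 i false <| closure_mono inter_subset_right <| hL _ inter_subset_left <|
      infinite_inter_of_nested (B := fun n => (N (n + 1)).A (i, false))
        (D := fun n => (N (n + 1)).A (i, true))
        (fun n => subset_closure.trans (hN (n + 1) i false))
        (fun n => subset_closure.trans (hN (n + 1) i true))
        (fun n => (N (n + 1)).pairwise_disjoint_A (by simp))
        (fun n => (hSN (n + 1)).2 (i, true))
  exact disjoint_left.1 ((N 0).pairwise_disjoint_A (by simp : (false, false) ≠ (true, false)))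
    (hLA false) (hLA true)

end MarkedNbhd

theorem stmt_8 {X : Type*} [TopologicalSpace X] [T2Space X] [RegularSpace X]
    (hcrowded : ∀ x : X, ¬ IsOpen ({x} : Set X)) :
    IsMeagre (Set.univ : Set (Sc X)) := by
  refine isMeagre_univ_of_tree (fun N : MarkedNbhd X => ((↑) : Sc X → Set X) ⁻¹' N.sets)
    MarkedNbhd.IsChild (fun N => N.isOpen_sets.preimage continuous_subtype_val) ?_ ?_ ?_
  · rintro O hO ⟨S, hSO⟩
    obtain ⟨O', hO', rfl⟩ := isOpen_induced_iff.1 hO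
    obtain ⟨N, rfl, ⟨K, hKN, hK⟩, -⟩ :=
      MarkedNbhd.exists_closure_A_subset hcrowded hO' hSO S.2 (T := fun _ => univ)
        (fun _ => isOpen_univ) fun _ => by simpa using S.2.nonempty
    exact ⟨N, ⟨⟨K, hK⟩, hKN⟩, fun K hK => hK.1⟩
  · rintro P O hO ⟨S, hSO, hSP⟩
    obtain ⟨O', hO', rfl⟩ := isOpen_induced_iff.1 hO
    obtain ⟨N, hNO, ⟨K, hKN, hK⟩, hPN⟩ := MarkedNbhd.exists_closure_A_subset hcrowded
      (hO'.inter P.isOpen_sets) ⟨hSO, hSP⟩ S.2 (fun i => P.isOpen_A (i, false))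
      fun i => hSP.2 (i, false)
    exact ⟨N, hPN, ⟨⟨K, hK⟩, hKN⟩,
      fun K hK => show _ ∈ O' ∩ P.sets from hNO ▸ hK.1⟩
  · exact fun N hN => eq_empty_of_forall_notMem fun S hS =>
      MarkedNbhd.not_isNTCS_of_forall_mem hN (fun n => mem_iInter.1 hS n) S.2
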